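/- Let A = ℂ⟨x,y⟩ with the double Poisson bracket ⟪x,y⟫ = x⊗x, ⟪x,x⟫ = ⟪y,y⟫ = 0. Then the zeroth double Poisson cohomology H⁰_P(A), i.e., {f ∈ A : μ(⟪f,a⟫) ∈ [A,A] for all a ∈ A} modulo [A,A], equals ℂ. -/

import Mathlib

open TensorProduct

noncomputable section

abbrev A2 := FreeAlgebra ℂ (Fin 2)

def Xg : A2 := FreeAlgebra.ι ℂ 0
def Yg : A2 := FreeAlgebra.ι ℂ 1

def mu : A2 ⊗[ℂ] A2 →ₗ[ℂ] A2 := LinearMap.mul' ℂ A2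

def commSpan : Submodule ℂ A2 :=
  Submodule.span ℂ {z : A2 | ∃ a b : A2, z = a * b - b * a}

/-- The double Casimirs of the bracket `B`: `{f | ∀ a, μ⟪f,a⟫ ∈ [A,A]}`. -/
def Cas (B : A2 →ₗ[ℂ] A2 →ₗ[ℂ] A2 ⊗[ℂ] A2) : Submodule ℂ A2 :=
  ⨅ a : A2, Submodule.comap (mu ∘ₗ B.flip a) commSpan

/-!
In the letters `0 = x` and `1 = y`: by the Leibniz rule, `μ⟪f, x⟫` and `μ⟪f, y⟫` are, modulo
`[A, A]`, (minus) the images of `f` under the operators on cyclic words replacing one letter `1`,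
respectively one letter `0`, by `00`. The coefficients of `f` on cyclic words (sums of coefficients
over the rotations of a word) detect `[A, A]` up to constants, so it suffices that these cyclic
coefficients `F` vanish on nonempty words. Dually, the Casimir conditions say that for every word
`v` the sum of `F` over all contractions of a cyclic pair `00` of `v` into `1` (respectively `0`)
vanishes. Contracting into `1` in `001ⁿ` gives `F (1ⁿ⁺¹) = 0`. A word containing `0` is, up to
rotation, `0ᵐ⁺¹t`; in `t0ᵐ⁺²` the `m + 1` contractions inside the block give back `0ᵐ⁺¹t`, and every
other one keeps a block `0ᵐ⁺²`, so vanishes by induction on the length of `t`. Hence every Casimir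
is a constant modulo `[A, A]`, and the constant term gives `H⁰ ≅ ℂ`.
-/

open Finset

namespace List

variable {α : Type*}

theorem sum_range_rotate_rotate {M : Type*} [AddCommMonoid M] (g : List α → M) (l : List α)
    (i : ℕ) : ∑ k ∈ Finset.range l.length, g ((l.rotate i).rotate k)
      = ∑ k ∈ Finset.range l.length, g (l.rotate k) := by
  calc ∑ k ∈ Finset.range l.length, g ((l.rotate i).rotate k)
      = ∑ k ∈ Finset.Ico i (i + l.length), g (l.rotate (k % l.length)) := by
        simp [Finset.sum_Ico_eq_sum_range, rotate_mod]
    _ = (((Multiset.Ico i (i + l.length)).map (· % l.length)).map (g ∘ l.rotate)).sum := by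
        rw [Multiset.map_map]
        rfl
    _ = ∑ k ∈ Finset.range l.length, g (l.rotate k) := by
        rw [Nat.multiset_Ico_map_mod]
        rfl

theorem rotate_append_of_le_length {l : List α} (l' : List α) {n : ℕ} (h : n ≤ l.length) :
    (l ++ l').rotate n = l.drop n ++ l' ++ l.take n := by
  rw [rotate_eq_drop_append_take (by simp; omega), drop_append_of_le_length h,
    take_append_of_le_length h, append_assoc]

theorem rotate_eq_getElem_cons {l : List α} {n : ℕ} (h : n < l.length) :
    l.rotate n = l[n] :: (l.drop (n + 1) ++ l.take n) := by
  rw [rotate_eq_drop_append_take h.le, drop_eq_getElem_cons h, cons_append]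

theorem rotate_replicate_append (a : α) {m i : ℕ} (t : List α) (h : i ≤ m) :
    (replicate m a ++ t).rotate i = replicate (m - i) a ++ t ++ replicate i a := by
  rw [rotate_append_of_le_length _ (by simpa using h), drop_replicate, take_replicate,
    Nat.min_eq_left h]

theorem isRotated_replicate_append_replicate (a : α) (p q : ℕ) (t : List α) :
    replicate p a ++ t ++ replicate q a ~r replicate (q + p) a ++ t := by
  rw [replicate_add, append_assoc (replicate q a)]
  exact isRotated_append

variable [DecidableEq α]

def rotCount (l u : List α) : ℕ := #{k ∈ Finset.range l.length | l.rotate k = u}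

theorem rotCount_rotate_left (l u : List α) (i : ℕ) : rotCount (l.rotate i) u = rotCount l u := by
  simp only [rotCount, card_filter, length_rotate]
  exact sum_range_rotate_rotate (fun r => if r = u then 1 else 0) l i

theorem rotCount_rotate_right (l u : List α) (i : ℕ) : rotCount l (u.rotate i) = rotCount l u := by
  obtain ⟨j, hj⟩ := IsRotated.forall u i
  have h : ∀ k, l.rotate k = u.rotate i ↔ (l.rotate j).rotate k = u := fun k => by
    rw [← rotate_eq_rotate (n := j), hj, rotate_rotate, rotate_rotate, Nat.add_comm]
  rw [← rotCount_rotate_left l u j, rotCount, rotCount, length_rotate]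
  simp only [h]

theorem rotCount_eq_zero_of_not_isRotated {l u : List α} (h : ¬l ~r u) : rotCount l u = 0 :=
  card_eq_zero.2 <| filter_eq_empty_iff.2 fun k _ hk => h ⟨k, hk⟩

theorem rotCount_comm (l u : List α) : rotCount l u = rotCount u l := by
  by_cases h : l ~r u
  · obtain ⟨i, rfl⟩ := h
    rw [rotCount_rotate_left, rotCount_rotate_right]
  · rw [rotCount_eq_zero_of_not_isRotated h,
      rotCount_eq_zero_of_not_isRotated fun h' => h h'.symm]

end List

section Sandwich

variable {R A : Type*} [CommSemiring R] [Semiring A] [Algebra R A]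

/-- The slot `z` collects the factors that the Leibniz rule moves past the bracket. -/
def sandwich (z : A) : A ⊗[R] A →ₗ[R] A :=
  TensorProduct.lift ((LinearMap.mul R A).flip ∘ₗ LinearMap.mulLeft R z)

@[simp] theorem sandwich_tmul (z u v : A) : sandwich (R := R) z (u ⊗ₜ v) = v * (z * u) := rfl

theorem mul'_comm_eq_sandwich_one (t : A ⊗[R] A) :
    LinearMap.mul' R A (TensorProduct.comm R A A t) = sandwich 1 t := by
  induction t using TensorProduct.induction_on with
  | zero => simp
  | tmul u v => simp
  | add t t' ht ht' => simp [ht, ht']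

theorem sandwich_tmul_one_mul (z b : A) (t : A ⊗[R] A) :
    sandwich z ((b ⊗ₜ 1) * t) = sandwich (z * b) t := by
  induction t using TensorProduct.induction_on with
  | zero => simp
  | tmul u v => simp [mul_assoc]
  | add t t' ht ht' => simp [mul_add, ht, ht']

theorem sandwich_mul_one_tmul (z c : A) (t : A ⊗[R] A) :
    sandwich z (t * (1 ⊗ₜ c)) = sandwich (c * z) t := by
  induction t using TensorProduct.induction_on with
  | zero => simp
  | tmul u v => simp [mul_assoc]
  | add t t' ht ht' => simp [add_mul, ht, ht']

end Sandwich

theorem map_one_eq_zero_of_leibniz {R A : Type*} [CommRing R] [Ring A] [Algebra R A]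
    (D : A →ₗ[R] A ⊗[R] A) (hD : ∀ b c, D (b * c) = (b ⊗ₜ 1) * D c + D b * (1 ⊗ₜ c)) :
    D 1 = 0 := by
  simpa [← Algebra.TensorProduct.one_def] using hD 1 1

namespace FreeAlgebra

variable {R X : Type*} [CommRing R]

def wordBasis : Module.Basis (List X) R (FreeAlgebra R X) :=
  (basisFreeMonoid R X).reindex FreeMonoid.toList

theorem wordBasis_apply (l : List X) : (wordBasis l : FreeAlgebra R X) = (l.map (ι R)).prod := by
  simp [wordBasis, basisFreeMonoid, equivMonoidAlgebraFreeMonoid]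

@[simp] theorem wordBasis_nil : (wordBasis [] : FreeAlgebra R X) = 1 := by simp [wordBasis_apply]

theorem wordBasis_cons (a : X) (l : List X) :
    (wordBasis (a :: l) : FreeAlgebra R X) = ι R a * wordBasis l := by simp [wordBasis_apply]

theorem wordBasis_append (l l' : List X) :
    (wordBasis (l ++ l') : FreeAlgebra R X) = wordBasis l * wordBasis l' := by
  simp [wordBasis_apply]

theorem map_mul_comm_of_wordBasis_append {M : Type*} [AddCommMonoid M] [Module R M]
    (φ : FreeAlgebra R X →ₗ[R] M) (hφ : ∀ p q, φ (wordBasis (p ++ q)) = φ (wordBasis (q ++ p)))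
    (f g : FreeAlgebra R X) : φ (f * g) = φ (g * f) := by
  suffices (LinearMap.mul R _).compr₂ φ = (LinearMap.mul R _).flip.compr₂ φ from
    LinearMap.congr_fun₂ this f g
  refine wordBasis.ext fun p => wordBasis.ext fun q => ?_
  simpa only [LinearMap.compr₂_apply, LinearMap.mul_apply', LinearMap.flip_apply,
    ← wordBasis_append] using hφ p q

theorem coord_nil_mul_comm (f g : FreeAlgebra R X) :
    wordBasis.coord [] (f * g) = wordBasis.coord [] (g * f) := by
  refine map_mul_comm_of_wordBasis_append _ (fun p q => ?_) f g
  simp [Finsupp.single_apply, and_comm]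

theorem sandwich_wordBasis_of_leibniz
    (D : FreeAlgebra R X →ₗ[R] FreeAlgebra R X ⊗[R] FreeAlgebra R X)
    (hD : ∀ b c, D (b * c) = (b ⊗ₜ 1) * D c + D b * (1 ⊗ₜ c)) (w : List X) (z : FreeAlgebra R X) :
    sandwich z (D (wordBasis w)) = ∑ i : Fin w.length,
      sandwich (wordBasis (w.drop (i + 1)) * z * wordBasis (w.take i)) (D (ι R w[i])) := by
  induction w generalizing z with
  | nil => simp [map_one_eq_zero_of_leibniz D hD]
  | cons a u ih =>
    rw [wordBasis_cons, hD, map_add, sandwich_tmul_one_mul, sandwich_mul_one_tmul, ih]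
    show _ = ∑ i : Fin (u.length + 1), _
    rw [Fin.sum_univ_succ, add_comm]
    simp [wordBasis_cons, mul_assoc]

def cyclicCoeff (v : List X) : Module.Dual R (FreeAlgebra R X) :=
  ∑ k ∈ Finset.range v.length, wordBasis.coord (v.rotate k)

theorem cyclicCoeff_rotate (v : List X) (i : ℕ) :
    (cyclicCoeff (v.rotate i) : Module.Dual R (FreeAlgebra R X)) = cyclicCoeff v := by
  simpa [cyclicCoeff] using v.sum_range_rotate_rotate (fun u => wordBasis.coord u) i

variable [DecidableEq X]

theorem cyclicCoeff_wordBasis (v u : List X) :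
    cyclicCoeff v (wordBasis u : FreeAlgebra R X) = v.rotCount u := by
  simp [cyclicCoeff, List.rotCount, Finsupp.single_apply, eq_comm]

theorem cyclicCoeff_mul_comm (v : List X) (f g : FreeAlgebra R X) :
    cyclicCoeff v (f * g) = cyclicCoeff v (g * f) := by
  refine map_mul_comm_of_wordBasis_append _ (fun p q => ?_) f g
  rw [cyclicCoeff_wordBasis, cyclicCoeff_wordBasis, ← List.rotate_append_length_eq p q,
    List.rotCount_rotate_right]

end FreeAlgebra

open FreeAlgebra

section Contraction

variable {M : Type*}

def headContract [Zero M] (c : Fin 2) (F : List (Fin 2) → M) : List (Fin 2) → M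
  | a :: b :: t => if a = 0 ∧ b = 0 then F (c :: t) else 0
  | _ => 0

/-- The transpose of the operator on cyclic words replacing one letter `c` by `00`. -/
def cyclicContract [AddCommMonoid M] (c : Fin 2) (F : List (Fin 2) → M) (v : List (Fin 2)) : M :=
  ∑ j ∈ Finset.range v.length, headContract c F (v.rotate j)

@[simp] theorem headContract_cons_zero_cons_zero [Zero M] (c : Fin 2) (F : List (Fin 2) → M)
    (t : List (Fin 2)) : headContract c F (0 :: 0 :: t) = F (c :: t) := by
  simp [headContract]

theorem headContract_eq_zero_of_head?_ne [Zero M] (c : Fin 2) (F : List (Fin 2) → M)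
    {r : List (Fin 2)} (h : r.head? ≠ some 0) : headContract c F r = 0 := by
  match r with
  | [] => rfl
  | [_] => rfl
  | a :: b :: t => simp_all [headContract]

theorem headContract_zero_eq_zero_of_tail [Zero M] {F : List (Fin 2) → M} {r : List (Fin 2)}
    (h : F r.tail = 0) : headContract 0 F r = 0 := by
  match r with
  | [] => rfl
  | [_] => rfl
  | a :: b :: t => by_cases hab : a = 0 ∧ b = 0 <;> simp_all [headContract]

theorem map_cyclicContract {N G : Type*} [AddCommMonoid M] [AddCommMonoid N] [FunLike G M N]
    [AddMonoidHomClass G M N] (g : G) (c : Fin 2) (F : List (Fin 2) → M) (v : List (Fin 2)) :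
    g (cyclicContract c F v) = cyclicContract c (g ∘ F) v := by
  rw [cyclicContract, map_sum]
  refine Finset.sum_congr rfl fun j _ => ?_
  match v.rotate j with
  | [] => simp [headContract]
  | [_] => simp [headContract]
  | a :: b :: t => by_cases hab : a = 0 ∧ b = 0 <;> simp [headContract, hab]

theorem cyclicContract_apply {R A : Type*} [CommSemiring R] [AddCommMonoid A] [Module R A]
    (c : Fin 2) (Φ : List (Fin 2) → Module.Dual R A) (v : List (Fin 2)) (x : A) :
    cyclicContract c Φ v x = cyclicContract c (fun u => Φ u x) v :=
  map_cyclicContract (LinearMap.applyₗ x) c Φ v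

/-- Both sides count the pairs of a rotation `c :: t` of `w` and a rotation `0 :: 0 :: t` of `v`. -/
theorem sum_rotCount_expand_eq_cyclicContract (c : Fin 2) (v w : List (Fin 2)) :
    ∑ i : Fin w.length,
      (if w[i] = c then (v.rotCount (0 :: 0 :: (w.drop (i + 1) ++ w.take i)) : ℂ) else 0)
      = cyclicContract c (fun u => (u.rotCount w : ℂ)) v := by
  let P : List (Fin 2) → List (Fin 2) → Prop := fun r r' => r.head? = some c ∧ r' = 0 :: 0 :: r.tail
  have hL : ∀ i : Fin w.length,
      (if w[i] = c then (v.rotCount (0 :: 0 :: (w.drop (i + 1) ++ w.take i)) : ℂ) else 0)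
        = ∑ j ∈ Finset.range v.length, if P (w.rotate i) (v.rotate j) then 1 else 0 := by
    intro i
    rw [List.rotate_eq_getElem_cons i.2]
    simp only [Fin.getElem_fin]
    split_ifs with hc
    · simp [P, hc, List.rotCount]
    · simp [P, hc]
  have hR : ∀ r, headContract c (fun u => (u.rotCount w : ℂ)) r
      = ∑ i ∈ Finset.range w.length, if P (w.rotate i) r then 1 else 0 := by
    rintro (_ | ⟨a, _ | ⟨b, t⟩⟩)
    · simp [headContract, P]
    · simp [headContract, P]
    · by_cases hab : a = 0 ∧ b = 0
      · obtain ⟨rfl, rfl⟩ := hab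
        have hP : ∀ r, P r (0 :: 0 :: t) ↔ r = c :: t := by
          rintro (_ | ⟨x, r⟩) <;> simp [P, eq_comm]
        rw [headContract_cons_zero_cons_zero, List.rotCount_comm, List.rotCount]
        simp [hP]
      · have hP : ∀ r, ¬ P r (a :: b :: t) := fun r hr => hab (by simp [P] at hr; simp [hr])
        simp [headContract, hab, hP]
  rw [cyclicContract, Finset.sum_congr rfl fun j _ => hR _, Finset.sum_comm,
    ← Fin.sum_univ_eq_sum_range
      (fun i => ∑ j ∈ Finset.range v.length, if P (w.rotate i) (v.rotate j) then (1 : ℂ) else 0)]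
  exact Finset.sum_congr rfl fun i _ => hL i

end Contraction

section Combinatorics

open List

variable {F : List (Fin 2) → ℂ}

theorem apply_replicate_one_eq_zero (h : ∀ v, cyclicContract 1 F v = 0) (n : ℕ) :
    F (replicate (n + 1) 1) = 0 := by
  have hv := h (0 :: 0 :: replicate n 1)
  rcases n with _ | n
  · simpa [cyclicContract, Finset.sum_range_succ, two_mul] using hv
  · rw [cyclicContract, length_cons, length_cons, Finset.sum_range_succ', Finset.sum_range_succ',
      Finset.sum_eq_zero fun k hk => headContract_eq_zero_of_head?_ne _ _ ?_] at hv
    · simpa [headContract, replicate_succ] using hv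
    · rw [head?_rotate (by simp at hk ⊢; omega)]
      simp at hk ⊢
      simp [hk]

theorem headContract_zero_rotate_of_lt_length {t : List (Fin 2)} {m : ℕ}
    (hblock : ∀ p q, p.length + q.length < t.length → F (p ++ replicate (m + 2) 0 ++ q) = 0)
    {j : ℕ} (hj : j < t.length) :
    headContract 0 F ((t ++ replicate (m + 2) 0).rotate j) = 0 := by
  rw [rotate_append_of_le_length _ hj.le]
  refine headContract_zero_eq_zero_of_tail ?_
  rw [drop_eq_getElem_cons hj, cons_append, cons_append, tail_cons]
  apply hblock
  simp only [length_drop, length_take]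
  omega

variable (hrot : ∀ u i, F (u.rotate i) = F u)
include hrot

theorem apply_eq_of_isRotated {u u' : List (Fin 2)} (h : u ~r u') : F u = F u' := by
  obtain ⟨i, rfl⟩ := h
  exact (hrot u i).symm

theorem headContract_zero_rotate_length_add (t : List (Fin 2)) {m i : ℕ} (hi : i < m + 1) :
    headContract 0 F ((t ++ replicate (m + 2) 0).rotate (t.length + i))
      = F (replicate (m + 1) 0 ++ t) := by
  rw [← rotate_rotate, rotate_append_length_eq, rotate_replicate_append _ _ (by omega),
    show m + 2 - i = m - i + 1 + 1 by omega, replicate_succ, replicate_succ]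
  simp only [cons_append, headContract_cons_zero_cons_zero]
  rw [← cons_append, ← cons_append, ← replicate_succ,
    apply_eq_of_isRotated hrot (isRotated_replicate_append_replicate _ _ _ _),
    show i + (m - i + 1) = m + 1 by omega]

theorem apply_replicate_zero_append_eq_zero (h : ∀ v, cyclicContract 0 F v = 0)
    (t : List (Fin 2)) (m : ℕ) : F (replicate (m + 1) 0 ++ t) = 0 := by
  induction' hk : t.length using Nat.strong_induction_on with k ih generalizing t m
  rcases t with _ | ⟨a, t'⟩
  · have hv := h (replicate (m + 2) 0)
    simp only [cyclicContract, rotate_replicate, length_replicate, sum_const, card_range] at hv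
    rw [replicate_succ, replicate_succ, headContract_cons_zero_cons_zero, ← replicate_succ,
      nsmul_eq_mul, mul_eq_zero] at hv
    simpa using hv.resolve_left (by norm_cast)
  have hblock : ∀ p q, p.length + q.length < (a :: t').length →
      F (p ++ replicate (m + 2) 0 ++ q) = 0 := by
    intro p q hpq
    rw [append_assoc, apply_eq_of_isRotated hrot isRotated_append, append_assoc]
    exact ih _ (by simp [← hk] at hpq ⊢; omega) _ _ rfl
  have hlast : headContract 0 F
      ((a :: t' ++ replicate (m + 2) 0).rotate ((a :: t').length + (m + 1))) = 0 := by
    rw [← rotate_rotate, rotate_append_length_eq, rotate_replicate_append _ _ (by omega),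
      show m + 2 - (m + 1) = 1 by omega]
    obtain rfl | rfl : a = 0 ∨ a = 1 := by omega
    · refine headContract_zero_eq_zero_of_tail ?_
      rw [replicate_one, singleton_append, cons_append, tail_cons, ← singleton_append,
        ← replicate_one, apply_eq_of_isRotated hrot (isRotated_replicate_append_replicate _ _ _ _)]
      exact ih _ (by simp [← hk]) _ _ rfl
    · simp [headContract]
  have hv := h (a :: t' ++ replicate (m + 2) 0)
  rw [cyclicContract, length_append, Finset.sum_range_add,
    Finset.sum_eq_zero fun j hj => headContract_zero_rotate_of_lt_length hblock (mem_range.1 hj),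
    zero_add, length_replicate, Finset.sum_range_succ, hlast, add_zero,
    Finset.sum_congr rfl fun i hi => headContract_zero_rotate_length_add hrot _ (mem_range.1 hi),
    sum_const, card_range, nsmul_eq_mul, mul_eq_zero] at hv
  exact hv.resolve_left (by norm_cast)

theorem apply_eq_zero_of_cyclicContract_eq_zero (h₀ : ∀ v, cyclicContract 0 F v = 0)
    (h₁ : ∀ v, cyclicContract 1 F v = 0) {w : List (Fin 2)} (hw : w ≠ []) : F w = 0 := by
  by_cases hmem : (0 : Fin 2) ∈ w
  · obtain ⟨p, q, rfl⟩ := append_of_mem hmem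
    rw [apply_eq_of_isRotated hrot isRotated_append]
    exact apply_replicate_zero_append_eq_zero hrot h₀ (q ++ p) 0
  · obtain ⟨n, rfl⟩ : ∃ n, w = replicate (n + 1) 1 := by
      refine ⟨w.length - 1, eq_replicate_iff.2 ⟨?_, fun b hb => ?_⟩⟩
      · have := length_pos_iff.2 hw
        omega
      · have : b ≠ 0 := fun h => hmem (h ▸ hb)
        omega
    exact apply_replicate_one_eq_zero h₁ n

end Combinatorics

section CommutatorSpan

theorem map_eq_zero_of_mem_commSpan (φ : A2 →ₗ[ℂ] ℂ) (hφ : ∀ f g, φ (f * g) = φ (g * f)) {z : A2}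
    (hz : z ∈ commSpan) : φ z = 0 :=
  (Submodule.span_le (p := LinearMap.ker φ)).2 (by rintro _ ⟨a, b, rfl⟩; simp [hφ a b]) hz

theorem wordBasis_sub_wordBasis_rotate_mem_commSpan (u : List (Fin 2)) (k : ℕ) :
    wordBasis u - wordBasis (u.rotate k) ∈ commSpan := by
  have hu : (wordBasis u : A2)
      = wordBasis (u.take (k % u.length)) * wordBasis (u.drop (k % u.length)) := by
    rw [← wordBasis_append, List.take_append_drop]
  rw [List.rotate_eq_drop_append_take_mod, wordBasis_append, hu]
  exact Submodule.subset_span ⟨_, _, rfl⟩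

def symmetrize : A2 →ₗ[ℂ] A2 :=
  wordBasis.constr ℂ fun u =>
    (u.length : ℂ)⁻¹ • ∑ k ∈ Finset.range u.length, wordBasis (u.rotate k)

theorem symmetrize_wordBasis (u : List (Fin 2)) : symmetrize (wordBasis u)
    = (u.length : ℂ)⁻¹ • ∑ k ∈ Finset.range u.length, wordBasis (u.rotate k) :=
  wordBasis.constr_basis ℂ _ u

theorem coord_symmetrize (v : List (Fin 2)) (f : A2) :
    wordBasis.coord v (symmetrize f) = (v.length : ℂ)⁻¹ * cyclicCoeff v f := by
  suffices (wordBasis.coord v).comp symmetrize = (v.length : ℂ)⁻¹ • cyclicCoeff v from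
    LinearMap.congr_fun this f
  refine wordBasis.ext fun u => ?_
  simp only [symmetrize, LinearMap.comp_apply, Module.Basis.constr_basis, map_smul, map_sum,
    Module.Basis.coord_apply, Module.Basis.repr_self, LinearMap.smul_apply, cyclicCoeff_wordBasis]
  rw [show ∑ k ∈ Finset.range u.length, Finsupp.single (u.rotate k) (1 : ℂ) v = u.rotCount v by
    simp [List.rotCount, Finsupp.single_apply], List.rotCount_comm, smul_eq_mul, smul_eq_mul]
  by_cases h : v ~r u
  · rw [h.perm.length_eq]
  · simp [List.rotCount_eq_zero_of_not_isRotated h]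

theorem sub_symmetrize_sub_mem_commSpan (f : A2) :
    f - symmetrize f - wordBasis.coord [] f • 1 ∈ commSpan := by
  let L : A2 →ₗ[ℂ] A2 := LinearMap.id - symmetrize - (wordBasis.coord []).smulRight 1
  suffices LinearMap.range L ≤ commSpan from this ⟨f, rfl⟩
  rw [LinearMap.range_eq_map, ← wordBasis.span_eq, Submodule.map_span_le]
  rintro _ ⟨u, rfl⟩
  rcases eq_or_ne u [] with rfl | hu
  · simp only [L, LinearMap.sub_apply, LinearMap.id_apply, symmetrize_wordBasis,
      LinearMap.smulRight_apply, Module.Basis.coord_apply, Module.Basis.repr_self]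
    simp
  have hlen : (u.length : ℂ) ≠ 0 := by simp [hu]
  have hL : L (wordBasis u) = (u.length : ℂ)⁻¹ •
      ∑ k ∈ Finset.range u.length, (wordBasis u - wordBasis (u.rotate k)) := by
    simp [L, symmetrize_wordBasis, hu.symm, Finset.sum_sub_distrib, smul_sub,
      ← Nat.cast_smul_eq_nsmul ℂ, smul_smul, hlen]
  rw [hL]
  exact Submodule.smul_mem _ _
    (Submodule.sum_mem _ fun k _ => wordBasis_sub_wordBasis_rotate_mem_commSpan u k)

theorem mem_commSpan_of_cyclicCoeff_eq_zero {f : A2} (h₀ : wordBasis.coord [] f = 0)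
    (h : ∀ v ≠ [], cyclicCoeff v f = 0) : f ∈ commSpan := by
  have hsym : symmetrize f = 0 := wordBasis.ext_elem fun v => by
    rcases eq_or_ne v [] with rfl | hv
    · rw [← Module.Basis.coord_apply, coord_symmetrize]
      simp
    · rw [← Module.Basis.coord_apply, coord_symmetrize, h v hv, mul_zero, map_zero]
      rfl
  simpa [hsym, h₀] using sub_symmetrize_sub_mem_commSpan f

end CommutatorSpan

theorem cyclicCoeff_Xg_mul_mul_Xg (v u : List (Fin 2)) :
    (cyclicCoeff v : Module.Dual ℂ A2) (Xg * (wordBasis u * Xg)) = v.rotCount (0 :: 0 :: u) := by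
  rw [← mul_assoc, cyclicCoeff_mul_comm, Xg, ← wordBasis_cons, ← wordBasis_cons,
    cyclicCoeff_wordBasis]

theorem cyclicCoeff_sandwich_one (D : A2 →ₗ[ℂ] A2 ⊗[ℂ] A2)
    (hD : ∀ b c, D (b * c) = (b ⊗ₜ 1) * D c + D b * (1 ⊗ₜ c)) (c₀ : Fin 2) (s : ℂ)
    (hDι : ∀ c, D (ι ℂ c) = if c = c₀ then s • (Xg ⊗ₜ Xg) else 0) (v : List (Fin 2)) (f : A2) :
    cyclicCoeff v (sandwich 1 (D f)) = s * cyclicContract c₀ (fun u => cyclicCoeff u f) v := by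
  rw [← cyclicContract_apply]
  suffices (cyclicCoeff v) ∘ₗ (sandwich 1) ∘ₗ D = s • cyclicContract c₀ cyclicCoeff v from
    LinearMap.congr_fun this f
  refine wordBasis.ext fun w => ?_
  rw [LinearMap.smul_apply, cyclicContract_apply, smul_eq_mul]
  simp only [cyclicCoeff_wordBasis]
  rw [← sum_rotCount_expand_eq_cyclicContract, Finset.mul_sum]
  simp only [LinearMap.comp_apply, sandwich_wordBasis_of_leibniz D hD, hDι, map_sum]
  refine Finset.sum_congr rfl fun i _ => ?_
  split_ifs
  · rw [map_smul, map_smul, sandwich_tmul, mul_one, ← wordBasis_append, cyclicCoeff_Xg_mul_mul_Xg,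
      smul_eq_mul]
  · simp

theorem cyclicContract_eq_zero_of_sandwich_mem (D : A2 →ₗ[ℂ] A2 ⊗[ℂ] A2)
    (hD : ∀ b c, D (b * c) = (b ⊗ₜ 1) * D c + D b * (1 ⊗ₜ c)) {c₀ : Fin 2} {s : ℂ} (hs : s ≠ 0)
    (hDι : ∀ c, D (ι ℂ c) = if c = c₀ then s • (Xg ⊗ₜ Xg) else 0) {f : A2}
    (hf : sandwich 1 (D f) ∈ commSpan) (v : List (Fin 2)) :
    cyclicContract c₀ (fun u => cyclicCoeff u f) v = 0 := by
  have hv := map_eq_zero_of_mem_commSpan _ (cyclicCoeff_mul_comm v) hf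
  rw [cyclicCoeff_sandwich_one D hD c₀ s hDι] at hv
  exact (mul_eq_zero.1 hv).resolve_left hs

section Bracket

variable (B : A2 →ₗ[ℂ] A2 →ₗ[ℂ] A2 ⊗[ℂ] A2)
  (hder : ∀ a b c : A2, B a (b * c) = (b ⊗ₜ[ℂ] (1 : A2)) * B a c + B a b * ((1 : A2) ⊗ₜ[ℂ] c))
  (hskew : ∀ a b : A2, B a b = - (TensorProduct.comm ℂ A2 A2) (B b a))
  (hxx : B Xg Xg = 0) (hyy : B Yg Yg = 0) (hxy : B Xg Yg = Xg ⊗ₜ[ℂ] Xg)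

include hskew in
theorem mem_Cas_iff {f : A2} : f ∈ Cas B ↔ ∀ a, sandwich 1 (B a f) ∈ commSpan := by
  simp [Cas, Submodule.mem_iInf, hskew f, mu, mul'_comm_eq_sandwich_one]

include hder hskew in
theorem one_mem_Cas : (1 : A2) ∈ Cas B :=
  (mem_Cas_iff B hskew).2 fun a => by
    simp [map_one_eq_zero_of_leibniz (B a) (hder a)]

include hder hskew hxx hyy hxy in
theorem cyclicContract_eq_zero_of_mem_Cas {f : A2} (hf : f ∈ Cas B) (c : Fin 2)
    (v : List (Fin 2)) : cyclicContract c (fun u => cyclicCoeff u f) v = 0 := by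
  have hx : (ι ℂ 0 : A2) = Xg := rfl
  have hy : (ι ℂ 1 : A2) = Yg := rfl
  fin_cases c
  · refine cyclicContract_eq_zero_of_sandwich_mem (B Yg) (hder Yg) (s := -1) (by norm_num)
      (Fin.forall_fin_two.2 ⟨?_, ?_⟩) ((mem_Cas_iff B hskew).1 hf Yg) v
    · simp only [hx, hskew Yg Xg, hxy, TensorProduct.comm_tmul]
      exact (neg_one_smul ℂ _).symm
    · simp [hy, hyy]
  · refine cyclicContract_eq_zero_of_sandwich_mem (B Xg) (hder Xg) one_ne_zero
      (Fin.forall_fin_two.2 ⟨?_, ?_⟩) ((mem_Cas_iff B hskew).1 hf Xg) v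
    · simp [hx, hxx]
    · simp [hy, hxy]

include hder hskew hxx hyy hxy in
theorem mem_commSpan_of_mem_Cas {f : A2} (hf : f ∈ Cas B) (h₀ : wordBasis.coord [] f = 0) :
    f ∈ commSpan :=
  mem_commSpan_of_cyclicCoeff_eq_zero h₀ fun _ hv =>
    apply_eq_zero_of_cyclicContract_eq_zero (F := fun u => cyclicCoeff u f)
      (fun u i => by simp only [cyclicCoeff_rotate])
      (cyclicContract_eq_zero_of_mem_Cas B hder hskew hxx hyy hxy hf 0)
      (cyclicContract_eq_zero_of_mem_Cas B hder hskew hxx hyy hxy hf 1) hv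

end Bracket

/-- For the double Poisson bracket on `ℂ⟨x,y⟩` with `⟪x,y⟫ = x⊗x`,
`⟪x,x⟫ = ⟪y,y⟫ = 0`, the zeroth double Poisson cohomology — double Casimirs modulo
`[A,A]` — equals `ℂ`. -/
theorem stmt_16 (B : A2 →ₗ[ℂ] A2 →ₗ[ℂ] A2 ⊗[ℂ] A2)
    (hder : ∀ a b c : A2, B a (b * c)
      = (b ⊗ₜ[ℂ] (1 : A2)) * B a c + B a b * ((1 : A2) ⊗ₜ[ℂ] c))
    (hskew : ∀ a b : A2, B a b = - (TensorProduct.comm ℂ A2 A2) (B b a))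
    (hxx : B Xg Xg = 0) (hyy : B Yg Yg = 0)
    (hxy : B Xg Yg = Xg ⊗ₜ[ℂ] Xg) :
    Nonempty ((Cas B ⧸ (commSpan.comap (Cas B).subtype)) ≃ₗ[ℂ] ℂ) := by
  let φ : Cas B →ₗ[ℂ] ℂ := wordBasis.coord [] ∘ₗ (Cas B).subtype
  have hker : LinearMap.ker φ = commSpan.comap (Cas B).subtype := by
    ext ⟨f, hf⟩
    exact ⟨mem_commSpan_of_mem_Cas B hder hskew hxx hyy hxy hf,
      map_eq_zero_of_mem_commSpan _ coord_nil_mul_comm⟩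
  have hsurj : Function.Surjective φ := fun r =>
    ⟨⟨r • 1, (Cas B).smul_mem r (one_mem_Cas B hder hskew)⟩, by simp [φ, ← wordBasis_nil]⟩
  exact ⟨(Submodule.quotEquivOfEq _ _ hker.symm).trans (φ.quotKerEquivOfSurjective hsurj)⟩

end
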